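/- arXiv:1109.4041 — 5 statements merged into one kernel-verified Lean document; each statement's English description precedes it below -/
import Mathlib

section
/- Under Assumption 1, if P(F(X) p(X) ≠ 0) > 0, then Q(θ) = E[F²(X) p(X)/p(X−θ)] (a value in [0,∞]) tends to +∞ as |θ| → ∞: for every sequence (θ_n) with |θ_n| → ∞ one has Q(θ_n) → ∞. -/
open MeasureTheory Filter Set
open scoped ENNReal Topology ProbabilityTheory

/-!
Fix `ω` with `F(X ω) p(X ω) ≠ 0`. Since `‖θₙ‖ → ∞`, the points `X ω - θₙ` leave every compact set,
so `p (X ω - θₙ) → 0⁺` and the integrand `F²(X ω) p(X ω) / p(X ω - θₙ)` tends to `∞`. This happens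
on a set of positive measure, so Fatou's lemma forces `Q(θₙ) → ∞`.
-/

theorem continuous_of_concaveOn_log {E : Type*} [NormedAddCommGroup E] [NormedSpace ℝ E]
    [FiniteDimensional ℝ E] {p : E → ℝ} (hp_pos : ∀ x, 0 < p x)
    (hlog : ConcaveOn ℝ univ fun x => Real.log (p x)) : Continuous p := by
  have hcont : Continuous fun x => Real.exp (Real.log (p x)) :=
    Real.continuous_exp.comp (continuousOn_univ.mp (hlog.continuousOn isOpen_univ))
  simpa only [Real.exp_log (hp_pos _)] using hcont

theorem tendsto_sub_cocompact_of_tendsto_norm {E ι : Type*} [SeminormedAddCommGroup E]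
    {l : Filter ι} {θ : ι → E} (hθ : Tendsto (fun n => ‖θ n‖) l atTop) (x : E) :
    Tendsto (fun n => x - θ n) l (cocompact E) := by
  refine tendsto_cocompact_of_tendsto_dist_comp_atTop x (hθ.congr fun n => ?_)
  rw [dist_eq_norm, sub_sub_cancel_left, norm_neg]

theorem tendsto_const_div_sub_atTop {E ι : Type*} [SeminormedAddCommGroup E] {p : E → ℝ}
    (hp_pos : ∀ x, 0 < p x) (hvanish : Tendsto p (cocompact E) (𝓝 0))
    {l : Filter ι} {θ : ι → E} (hθ : Tendsto (fun n => ‖θ n‖) l atTop) (x : E) {c : ℝ}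
    (hc : 0 < c) : Tendsto (fun n => c / p (x - θ n)) l atTop := by
  have hp_zero : Tendsto (fun n => p (x - θ n)) l (𝓝[>] 0) :=
    tendsto_nhdsWithin_of_tendsto_nhds_of_eventually_within _
      (hvanish.comp (tendsto_sub_cocompact_of_tendsto_norm hθ x))
      (Eventually.of_forall fun n => hp_pos _)
  simpa only [div_eq_mul_inv, Pi.inv_apply] using hp_zero.inv_tendsto_nhdsGT_zero.const_mul_atTop hc

theorem tendsto_lintegral_top_of_tendsto_top_on {α : Type*} [MeasurableSpace α]
    {μ : Measure α} {f : ℕ → α → ℝ≥0∞} (hf : ∀ n, Measurable (f n)) {s : Set α} (hs : μ s ≠ 0)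
    (h : ∀ x ∈ s, Tendsto (fun n => f n x) atTop (𝓝 ∞)) :
    Tendsto (fun n => ∫⁻ x, f n x ∂μ) atTop (𝓝 ∞) := by
  have hs_sub : s ⊆ {x | liminf (fun n => f n x) atTop = ∞} := fun x hx => (h x hx).liminf_eq
  have hliminf : ∫⁻ x, liminf (fun n => f n x) atTop ∂μ = ∞ :=
    lintegral_eq_top_of_measure_eq_top_ne_zero (Measurable.liminf hf).aemeasurable
      (fun h0 => hs (measure_mono_null hs_sub h0))
  refine tendsto_of_le_liminf_of_limsup_le ?_ le_top
  exact hliminf ▸ lintegral_liminf_le hf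

theorem stmt3_general {d : ℕ}
    {Ω : Type*} [MeasureSpace Ω]
    (X : Ω → EuclideanSpace ℝ (Fin d)) (hX : Measurable X)
    (p F : EuclideanSpace ℝ (Fin d) → ℝ) (hF : Measurable F)
    (hp_pos : ∀ x, 0 < p x)
    -- Assumption 1
    (hlogconc : StrictConcaveOn ℝ univ (fun x => Real.log (p x)))
    (hvanish : Tendsto p (cocompact (EuclideanSpace ℝ (Fin d))) (𝓝 0))
    (hFp : 0 < ℙ {ω | F (X ω) * p (X ω) ≠ 0})
    (Q : EuclideanSpace ℝ (Fin d) → ℝ≥0∞)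
    (hQ : ∀ θ, Q θ = ∫⁻ ω, ENNReal.ofReal (F (X ω)^2 * p (X ω) / p (X ω - θ)) ∂ℙ) :
    ∀ θn : ℕ → EuclideanSpace ℝ (Fin d),
      Tendsto (fun n => ‖θn n‖) atTop atTop →
      Tendsto (fun n => Q (θn n)) atTop (𝓝 ⊤) := by
  intro θn hθn
  have hp : Measurable p := (continuous_of_concaveOn_log hp_pos hlogconc.concaveOn).measurable
  simp only [hQ]
  refine tendsto_lintegral_top_of_tendsto_top_on (fun n => ?_) hFp.ne' fun ω hω => ?_
  · exact ENNReal.measurable_ofReal.comp ((((hF.comp hX).pow_const 2).mul (hp.comp hX)).div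
      (hp.comp (hX.sub_const _)))
  · have hFX : F (X ω) ≠ 0 := left_ne_zero_of_mul hω
    have hc : 0 < F (X ω) ^ 2 * p (X ω) := mul_pos (sq_pos_of_ne_zero hFX) (hp_pos _)
    exact ENNReal.tendsto_ofReal_atTop.comp
      (tendsto_const_div_sub_atTop hp_pos hvanish hθn (X ω) hc)

/-- Under Assumption 1, if `P(F(X) p(X) ≠ 0) > 0`, then `Q(θ) = E[F²(X)p(X)/p(X−θ)] ∈ [0,∞]`
tends to `+∞` along every sequence `(θ_n)` with `|θ_n| → ∞`. -/
theorem stmt3 {d : ℕ} (hd : 0 < d)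
    {Ω : Type*} [MeasureSpace Ω] [IsProbabilityMeasure (ℙ : Measure Ω)]
    (X : Ω → EuclideanSpace ℝ (Fin d)) (hX : Measurable X)
    (p F : EuclideanSpace ℝ (Fin d) → ℝ) (hF : Measurable F)
    (hp_pos : ∀ x, 0 < p x)
    (hdensity : (ℙ : Measure Ω).map X = volume.withDensity (fun x => ENNReal.ofReal (p x)))
    -- Assumption 1
    (hlogconc : StrictConcaveOn ℝ univ (fun x => Real.log (p x)))
    (hvanish : Tendsto p (cocompact (EuclideanSpace ℝ (Fin d))) (𝓝 0))
    (hFp : 0 < ℙ {ω | F (X ω) * p (X ω) ≠ 0})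
    (Q : EuclideanSpace ℝ (Fin d) → ℝ≥0∞)
    (hQ : ∀ θ, Q θ = ∫⁻ ω, ENNReal.ofReal (F (X ω)^2 * p (X ω) / p (X ω - θ)) ∂ℙ) :
    ∀ θn : ℕ → EuclideanSpace ℝ (Fin d),
      Tendsto (fun n => ‖θn n‖) atTop atTop →
      Tendsto (fun n => Q (θn n)) atTop (𝓝 ⊤) :=
  stmt3_general X hX p F hF hp_pos hlogconc hvanish hFp Q hQ
end

section
/- Under Assumptions 1, 2 and 3, for every R > 0 there exists a constant C = C(R) > 0, depending only on R, p, F and the moments of X appearing in Assumption 3 (in particular not on the quantizer), such that for every stationary quantization X̂ of X, sup_{|θ| ≤ R} |Q(θ) − Q̂(θ)| ≤ C ‖X − X̂‖₂, where Q̂(θ) = E[F²(X̂) p(X̂)/p(X̂ − θ)] and ‖Y‖₂ = (E|Y|²)^{1/2}. -/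
/-!
Write `F z ^ 2 * p z / p (z - θ) = F z ^ 2 * exp (log p z - log p (z - θ))`. The growth bound on
`∇p / p` makes `log p` Lipschitz on the ball of radius `r` with constant `O(1 + r)`; together with
the Lipschitz bound on `F` this gives, uniformly in `‖θ‖ ≤ R`,
`|φ_θ x - φ_θ y| ≤ C exp (M max ‖x‖ ‖y‖) ‖x - y‖`. Cauchy–Schwarz then bounds `|Q θ - Q̂ θ|` by
`C ‖exp (M max ‖X‖ ‖X̂‖)‖₂ ‖X - X̂‖₂`, and stationarity enters only through the conditional Jensen
inequality `E exp (2M ‖X̂‖) ≤ E exp (2M ‖X‖)`, which makes the first factor independent of the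
quantizer.
-/

open MeasureTheory Filter Set RealInnerProductSpace
open scoped ENNReal NNReal Topology ProbabilityTheory

section Real

open Real

lemma abs_exp_sub_exp_le (a b : ℝ) : |exp a - exp b| ≤ exp (max a b) * |a - b| := by
  wlog hba : b ≤ a generalizing a b
  · rw [abs_sub_comm, abs_sub_comm a, max_comm]
    exact this b a (le_of_not_ge hba)
  rw [max_eq_left hba, abs_of_nonneg (sub_nonneg.2 hba),
    abs_of_nonneg (sub_nonneg.2 (exp_le_exp.2 hba))]
  calc exp a - exp b = exp a * (1 - exp (-(a - b))) := by
        rw [mul_sub, ← exp_add]; ring_nf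
    _ ≤ exp a * (a - b) :=
        mul_le_mul_of_nonneg_left (by linarith [one_sub_le_exp_neg (a - b)]) (exp_pos a).le

lemma pow_le_exp_nat_mul {s : ℝ} (hs : 0 ≤ s) (n : ℕ) : s ^ n ≤ exp (n * s) := by
  rw [exp_nat_mul]
  gcongr
  linarith [add_one_le_exp s]

lemma rpow_le_one_add {t α : ℝ} (ht : 0 ≤ t) (hα₀ : 0 ≤ α) (hα₁ : α ≤ 1) : t ^ α ≤ 1 + t := by
  rcases le_total t 1 with ht1 | ht1
  · linarith [rpow_le_one ht ht1 hα₀]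
  · linarith [rpow_le_self_of_one_le ht1 hα₁]

lemma abs_sq_mul_exp_sub_sq_mul_exp_le {f g u v a k b c δ : ℝ} (hf : 0 ≤ f) (hg : 0 ≤ g)
    (hfa : f ≤ a) (hga : g ≤ a) (hfg : |f - g| ≤ k * δ) (hua : u ≤ b) (hvb : v ≤ b)
    (huv : |u - v| ≤ c * δ) :
    |f ^ 2 * exp u - g ^ 2 * exp v| ≤ (2 * a * k + a ^ 2 * c) * exp b * δ := by
  have hsq : |f ^ 2 - g ^ 2| ≤ 2 * a * (k * δ) := by
    rw [sq_sub_sq, abs_mul, abs_of_nonneg (by positivity : 0 ≤ f + g)]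
    exact mul_le_mul (by linarith) hfg (abs_nonneg _) (by linarith)
  have hexp : |exp u - exp v| ≤ exp b * (c * δ) :=
    (abs_exp_sub_exp_le u v).trans (by gcongr; exact max_le hua hvb)
  calc |f ^ 2 * exp u - g ^ 2 * exp v|
        = |(f ^ 2 - g ^ 2) * exp u + g ^ 2 * (exp u - exp v)| := by ring_nf
    _ ≤ |f ^ 2 - g ^ 2| * exp u + g ^ 2 * |exp u - exp v| := by
        refine (abs_add_le _ _).trans_eq ?_
        rw [abs_mul, abs_mul, abs_of_pos (exp_pos u), abs_of_nonneg (sq_nonneg g)]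
    _ ≤ 2 * a * (k * δ) * exp b + a ^ 2 * (exp b * (c * δ)) := by
        gcongr
        exact (abs_nonneg _).trans hsq
    _ = (2 * a * k + a ^ 2 * c) * exp b * δ := by ring

end Real

lemma exists_le_mul_one_add_norm_of_le_rpow {E : Type*} [SeminormedAddCommGroup E] [ProperSpace E]
    {g : E → ℝ} (hg : Continuous g)
    {C R α : ℝ} (hα₀ : 0 ≤ α) (hα₁ : α ≤ 1) (hgrowth : ∀ x, R ≤ ‖x‖ → g x ≤ C * ‖x‖ ^ α) :
    ∃ B, ∀ x, g x ≤ B * (1 + ‖x‖) := by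
  obtain ⟨C₀, hC₀⟩ :=
    (isCompact_closedBall (0 : E) R).exists_bound_of_continuousOn hg.continuousOn
  refine ⟨|C₀| + |C|, fun x => ?_⟩
  have hx : 0 ≤ ‖x‖ := norm_nonneg x
  rcases le_or_gt R ‖x‖ with hRx | hxR
  · calc g x ≤ C * ‖x‖ ^ α := hgrowth x hRx
      _ ≤ |C| * (1 + ‖x‖) := by
          gcongr
          · exact le_abs_self C
          · exact rpow_le_one_add hx hα₀ hα₁
      _ ≤ (|C₀| + |C|) * (1 + ‖x‖) := by gcongr; exact le_add_of_nonneg_left (abs_nonneg _)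
  · have hgx : g x ≤ |C₀| :=
      (le_abs_self _).trans ((hC₀ x (by simpa using hxR.le)).trans (le_abs_self _))
    nlinarith [abs_nonneg C, abs_nonneg C₀]

section LocallyLipschitz

variable {E F : Type*} [NormedAddCommGroup E] [NormedSpace ℝ E] [NormedAddCommGroup F]
  [NormedSpace ℝ F]

lemma norm_sub_le_of_norm_fderiv_le_mul_one_add_norm {f : E → F} (hf : Differentiable ℝ f)
    {B : ℝ} (hB : ∀ z, ‖fderiv ℝ f z‖ ≤ B * (1 + ‖z‖)) (x y : E) :
    ‖f x - f y‖ ≤ B * (1 + max ‖x‖ ‖y‖) * ‖x - y‖ := by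
  have hB₀ : 0 ≤ B := by simpa using (norm_nonneg _).trans (hB 0)
  have hx : x ∈ Metric.closedBall (0 : E) (max ‖x‖ ‖y‖) := by simp
  have hy : y ∈ Metric.closedBall (0 : E) (max ‖x‖ ‖y‖) := by simp
  refine (convex_closedBall _ _).norm_image_sub_le_of_norm_fderiv_le (fun z _ => hf z)
    (fun z hz => (hB z).trans ?_) hy hx
  gcongr
  simpa using hz

lemma exists_abs_log_sub_log_le [ProperSpace E] {p : E → ℝ} (hp_pos : ∀ x, 0 < p x)
    (hp : ContDiff ℝ 1 p) {C R α : ℝ} (hα₀ : 0 ≤ α) (hα₁ : α ≤ 1)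
    (hgrowth : ∀ x, R ≤ ‖x‖ → ‖fderiv ℝ p x‖ / p x ≤ C * ‖x‖ ^ α) :
    ∃ B, 0 ≤ B ∧ ∀ x y,
      |Real.log (p x) - Real.log (p y)| ≤ B * (1 + max ‖x‖ ‖y‖) * ‖x - y‖ := by
  have hlog : ∀ z, HasFDerivAt (fun y => Real.log (p y)) ((p z)⁻¹ • fderiv ℝ p z) z :=
    fun z => ((hp.differentiable one_ne_zero) z).hasFDerivAt.log (hp_pos z).ne'
  have hnorm : ∀ z, ‖fderiv ℝ (fun y => Real.log (p y)) z‖ = ‖fderiv ℝ p z‖ / p z := by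
    intro z
    rw [(hlog z).fderiv, norm_smul, norm_inv, Real.norm_of_nonneg (hp_pos z).le, inv_mul_eq_div]
  obtain ⟨B, hB⟩ := exists_le_mul_one_add_norm_of_le_rpow
    ((hp.continuous_fderiv one_ne_zero).norm.div hp.continuous fun z => (hp_pos z).ne')
    hα₀ hα₁ hgrowth
  refine ⟨B, by simpa using (div_nonneg (norm_nonneg _) (hp_pos 0).le).trans (hB 0), ?_⟩
  simpa only [Real.norm_eq_abs] using norm_sub_le_of_norm_fderiv_le_mul_one_add_norm
    (fun z => (hlog z).differentiableAt) (fun z => (hnorm z).trans_le (hB z))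

end LocallyLipschitz

section ShiftedLogRatio

open Real

variable {E : Type*} [NormedAddCommGroup E] {L : E → ℝ} {B R : ℝ} {θ : E}

lemma abs_sub_comp_sub_le (hB : 0 ≤ B)
    (hL : ∀ x y, |L x - L y| ≤ B * (1 + max ‖x‖ ‖y‖) * ‖x - y‖) (hθ : ‖θ‖ ≤ R) (z : E) :
    |L z - L (z - θ)| ≤ B * (1 + R + ‖z‖) * R := by
  have hmax : max ‖z‖ ‖z - θ‖ ≤ R + ‖z‖ :=
    max_le (by linarith [norm_nonneg θ]) ((norm_sub_le z θ).trans (by linarith))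
  calc |L z - L (z - θ)| ≤ B * (1 + max ‖z‖ ‖z - θ‖) * ‖θ‖ := by
        simpa only [sub_sub_cancel] using hL z (z - θ)
    _ ≤ B * (1 + R + ‖z‖) * R := by
        have hR : 0 ≤ R := (norm_nonneg θ).trans hθ
        exact mul_le_mul (mul_le_mul_of_nonneg_left (by linarith) hB) hθ (norm_nonneg _)
          (by positivity)

lemma abs_sub_comp_sub_sub_le (hB : 0 ≤ B)
    (hL : ∀ x y, |L x - L y| ≤ B * (1 + max ‖x‖ ‖y‖) * ‖x - y‖) (hθ : ‖θ‖ ≤ R) (x y : E) :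
    |(L x - L (x - θ)) - (L y - L (y - θ))| ≤ 2 * B * (1 + R + max ‖x‖ ‖y‖) * ‖x - y‖ := by
  have hmax : max ‖x - θ‖ ‖y - θ‖ ≤ R + max ‖x‖ ‖y‖ := by
    refine max_le ((norm_sub_le x θ).trans ?_) ((norm_sub_le y θ).trans ?_) <;>
      linarith [le_max_left ‖x‖ ‖y‖, le_max_right ‖x‖ ‖y‖]
  have hshift := hL (x - θ) (y - θ)
  rw [sub_sub_sub_cancel_right] at hshift
  calc |(L x - L (x - θ)) - (L y - L (y - θ))|
        ≤ |L x - L y| + |L (x - θ) - L (y - θ)| := by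
          rw [sub_sub_sub_comm]; exact abs_sub _ _
    _ ≤ B * (1 + max ‖x‖ ‖y‖) * ‖x - y‖ + B * (1 + max ‖x - θ‖ ‖y - θ‖) * ‖x - y‖ :=
        add_le_add (hL x y) hshift
    _ ≤ 2 * B * (1 + R + max ‖x‖ ‖y‖) * ‖x - y‖ := by
        have hR : 0 ≤ R := (norm_nonneg θ).trans hθ
        have := mul_nonneg hB (norm_nonneg (x - y))
        nlinarith

lemma exists_abs_sq_mul_exp_sub_le (hB : 0 ≤ B)
    (hL : ∀ x y, |L x - L y| ≤ B * (1 + max ‖x‖ ‖y‖) * ‖x - y‖) {F : E → ℝ}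
    (hF₀ : ∀ z, 0 ≤ F z) {K : ℝ≥0} (hF : LipschitzWith K F) (hR : 0 ≤ R) :
    ∃ C M, 0 ≤ C ∧ 0 < M ∧ ∀ θ : E, ‖θ‖ ≤ R → ∀ x y,
      |F x ^ 2 * exp (L x - L (x - θ)) - F y ^ 2 * exp (L y - L (y - θ))|
        ≤ C * exp (M * max ‖x‖ ‖y‖) * ‖x - y‖ := by
  set A := F 0 + K
  have hA : 0 ≤ A := add_nonneg (hF₀ 0) K.coe_nonneg
  set M := B * R + 3
  -- With `s = 1 + R + max ‖x‖ ‖y‖`: `F ≤ A s`, the log-ratio is `≤ B R s`, and `s ^ 3 ≤ exp (3 s)`.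
  refine ⟨2 * A * (K + A * B) * exp (M * (1 + R)), M, by positivity, by positivity,
    fun θ hθ x y => ?_⟩
  set r := max ‖x‖ ‖y‖
  set s := 1 + R + r
  have hr : 0 ≤ r := (norm_nonneg x).trans (le_max_left _ _)
  have hs : 1 ≤ s := by linarith
  have hFlip : ∀ z w, |F z - F w| ≤ K * ‖z - w‖ := fun z w => by
    simpa only [dist_eq_norm, Real.norm_eq_abs] using hF.dist_le_mul z w
  have hF_le : ∀ z : E, ‖z‖ ≤ r → F z ≤ A * s := fun z hz => by
    have := (le_abs_self _).trans (hFlip z 0)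
    rw [sub_zero] at this
    nlinarith [hF₀ 0, K.coe_nonneg]
  have hu_le : ∀ z : E, ‖z‖ ≤ r → L z - L (z - θ) ≤ B * R * s := fun z hz => by
    refine (le_abs_self _).trans ((abs_sub_comp_sub_le hB hL hθ z).trans ?_)
    have := mul_nonneg hB hR
    nlinarith
  have hexp : exp (3 * s) * exp (B * R * s) = exp (M * (1 + R)) * exp (M * r) := by
    rw [← exp_add, ← exp_add]
    congr 1
    simp only [s, M]
    ring
  calc |F x ^ 2 * exp (L x - L (x - θ)) - F y ^ 2 * exp (L y - L (y - θ))|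
      ≤ (2 * (A * s) * K + (A * s) ^ 2 * (2 * B * s)) * exp (B * R * s) * ‖x - y‖ :=
        abs_sq_mul_exp_sub_sq_mul_exp_le (hF₀ x) (hF₀ y) (hF_le x (le_max_left _ _))
          (hF_le y (le_max_right _ _)) (hFlip x y) (hu_le x (le_max_left _ _))
          (hu_le y (le_max_right _ _)) (abs_sub_comp_sub_sub_le hB hL hθ x y)
    _ ≤ 2 * A * (K + A * B) * s ^ 3 * exp (B * R * s) * ‖x - y‖ := by
        gcongr
        have := mul_nonneg hA K.coe_nonneg
        nlinarith [pow_le_pow_right₀ hs (by norm_num : 1 ≤ 3)]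
    _ ≤ 2 * A * (K + A * B) * exp (3 * s) * exp (B * R * s) * ‖x - y‖ := by
        gcongr
        exact_mod_cast pow_le_exp_nat_mul (by positivity) 3
    _ = 2 * A * (K + A * B) * exp (M * (1 + R)) * exp (M * r) * ‖x - y‖ := by
        rw [mul_assoc (2 * A * (K + A * B)), hexp, ← mul_assoc]

end ShiftedLogRatio

section StationaryQuantization

open Real

variable {Ω E : Type*} {m mΩ : MeasurableSpace Ω} {μ : Measure Ω}
  [NormedAddCommGroup E] [NormedSpace ℝ E]

lemma convexOn_exp_mul_norm {c : ℝ} (hc : 0 ≤ c) :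
    ConvexOn ℝ univ (fun x : E => exp (c * ‖x‖)) := by
  have hf : ConvexOn ℝ univ (fun x : E => c * ‖x‖) := (convexOn_norm convex_univ).smul hc
  have himage : Convex ℝ ((fun x : E => c * ‖x‖) '' univ) :=
    (isPreconnected_univ.image _
      (by fun_prop : Continuous fun x : E => c * ‖x‖).continuousOn).convex
  exact (convexOn_exp.subset (subset_univ _) himage).comp hf (exp_monotone.monotoneOn _)

lemma exp_mul_max_sq_le (M a b : ℝ) :
    exp (M * max a b) ^ 2 ≤ exp (2 * M * a) + exp (2 * M * b) := by
  have hsq : ∀ t, exp (M * t) ^ 2 = exp (2 * M * t) := fun t => by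
    rw [← exp_nat_mul]; ring_nf
  rcases max_choice a b with h | h <;> rw [h, hsq] <;>
    linarith [exp_pos (2 * M * a), exp_pos (2 * M * b)]

lemma memLp_of_finite_range [IsFiniteMeasure μ] {β : Type*} [NormedAddCommGroup β] {f : Ω → β}
    (hf : AEStronglyMeasurable f μ) (hfin : (range f).Finite) (q : ℝ≥0∞) : MemLp f q μ := by
  obtain ⟨C, hC⟩ := (hfin.image norm).bddAbove
  exact MemLp.of_bound hf C (ae_of_all _ fun ω => hC ⟨f ω, mem_range_self ω, rfl⟩)

lemma integral_mul_le_L2_mul_L2_of_nonneg {f g : Ω → ℝ} (hf₀ : 0 ≤ᵐ[μ] f) (hg₀ : 0 ≤ᵐ[μ] g)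
    (hf : MemLp f 2 μ) (hg : MemLp g 2 μ) :
    ∫ ω, f ω * g ω ∂μ ≤ (∫ ω, f ω ^ 2 ∂μ) ^ (1 / 2 : ℝ) * (∫ ω, g ω ^ 2 ∂μ) ^ (1 / 2 : ℝ) := by
  simpa only [rpow_two] using integral_mul_le_Lp_mul_Lq_of_nonneg HolderConjugate.two_two hf₀ hg₀
    (by simpa using hf) (by simpa using hg)

variable [CompleteSpace E] [IsFiniteMeasure μ] {X Y : Ω → E}

lemma integral_comp_le_of_condExp_ae_eq (hm : m ≤ mΩ) (hXY : μ[X | m] =ᵐ[μ] Y) {G : E → ℝ}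
    (hG : ConvexOn ℝ univ G) (hGc : LowerSemicontinuous G) (hX : Integrable X μ)
    (hGX : Integrable (fun ω => G (X ω)) μ) (hGY : Integrable (fun ω => G (Y ω)) μ) :
    ∫ ω, G (Y ω) ∂μ ≤ ∫ ω, G (X ω) ∂μ :=
  calc ∫ ω, G (Y ω) ∂μ ≤ ∫ ω, μ[fun ω => G (X ω) | m] ω ∂μ := by
        refine integral_mono_ae hGY integrable_condExp ?_
        filter_upwards [hXY, hG.map_condExp_le_univ hm hGc hX hGX] with ω hω hJensen
        rw [← hω]
        exact hJensen
    _ = ∫ ω, G (X ω) ∂μ := integral_condExp hm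

variable [MeasurableSpace E] [BorelSpace E]

lemma integral_exp_mul_max_norm_sq_le (hm : m ≤ mΩ) (hXY : μ[X | m] =ᵐ[μ] Y) (hX : Measurable X)
    (hY : Measurable Y) (hYfin : (range Y).Finite) (hXint : Integrable X μ) {M : ℝ} (hM : 0 ≤ M)
    (hexp : Integrable (fun ω => exp (2 * M * ‖X ω‖)) μ) :
    Integrable (fun ω => exp (M * max ‖X ω‖ ‖Y ω‖) ^ 2) μ ∧
      ∫ ω, exp (M * max ‖X ω‖ ‖Y ω‖) ^ 2 ∂μ ≤ 2 * ∫ ω, exp (2 * M * ‖X ω‖) ∂μ := by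
  have hexpY : Integrable (fun ω => exp (2 * M * ‖Y ω‖)) μ := by
    have hfin := hYfin.image fun y => exp (2 * M * ‖y‖)
    rw [← range_comp] at hfin
    exact memLp_one_iff_integrable.1
      (memLp_of_finite_range (hY.norm.const_mul _).exp.aestronglyMeasurable hfin 1)
  have hJensen : ∫ ω, exp (2 * M * ‖Y ω‖) ∂μ ≤ ∫ ω, exp (2 * M * ‖X ω‖) ∂μ :=
    integral_comp_le_of_condExp_ae_eq hm hXY (convexOn_exp_mul_norm (by positivity))
      (by fun_prop : Continuous fun x : E => exp (2 * M * ‖x‖)).lowerSemicontinuous hXint hexp hexpY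
  have hbound := fun ω => exp_mul_max_sq_le M ‖X ω‖ ‖Y ω‖
  have hint : Integrable (fun ω => exp (M * max ‖X ω‖ ‖Y ω‖) ^ 2) μ :=
    (hexp.add hexpY).mono'
      (((hX.norm.max hY.norm).const_mul _).exp.pow_const 2).aestronglyMeasurable
      (ae_of_all _ fun ω => by rw [Real.norm_of_nonneg (sq_nonneg _)]; exact hbound ω)
  refine ⟨hint, ?_⟩
  calc ∫ ω, exp (M * max ‖X ω‖ ‖Y ω‖) ^ 2 ∂μ
      ≤ ∫ ω, (exp (2 * M * ‖X ω‖) + exp (2 * M * ‖Y ω‖)) ∂μ :=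
        integral_mono hint (hexp.add hexpY) hbound
    _ = ∫ ω, exp (2 * M * ‖X ω‖) ∂μ + ∫ ω, exp (2 * M * ‖Y ω‖) ∂μ := integral_add hexp hexpY
    _ ≤ 2 * ∫ ω, exp (2 * M * ‖X ω‖) ∂μ := by linarith

lemma abs_integral_comp_sub_integral_comp_le (hm : m ≤ mΩ) (hXY : μ[X | m] =ᵐ[μ] Y)
    (hX : Measurable X) (hY : Measurable Y) (hYfin : (range Y).Finite) (hX2 : MemLp X 2 μ)
    {M : ℝ} (hM : 0 ≤ M) (hexp : Integrable (fun ω => exp (2 * M * ‖X ω‖)) μ) {φ : E → ℝ}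
    (hφ : Measurable φ) {C : ℝ} (hC : 0 ≤ C)
    (hφC : ∀ x y, |φ x - φ y| ≤ C * exp (M * max ‖x‖ ‖y‖) * ‖x - y‖) :
    |∫ ω, φ (X ω) ∂μ - ∫ ω, φ (Y ω) ∂μ|
      ≤ C * (2 * ∫ ω, exp (2 * M * ‖X ω‖) ∂μ) ^ (1 / 2 : ℝ)
        * (∫ ω, ‖X ω - Y ω‖ ^ 2 ∂μ) ^ (1 / 2 : ℝ) := by
  obtain ⟨hW2, hW2_le⟩ := integral_exp_mul_max_norm_sq_le hm hXY hX hY hYfin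
    (hX2.integrable one_le_two) hM hexp
  have hW : MemLp (fun ω => exp (M * max ‖X ω‖ ‖Y ω‖)) 2 μ :=
    (memLp_two_iff_integrable_sq
      ((hX.norm.max hY.norm).const_mul _).exp.aestronglyMeasurable).2 hW2
  have hD : MemLp (fun ω => ‖X ω - Y ω‖) 2 μ :=
    (hX2.sub (memLp_of_finite_range (integrable_condExp.1.congr hXY) hYfin 2)).norm
  have hWD := (hW.integrable_mul hD).const_mul C
  have hdiff : ∀ ω, |φ (X ω) - φ (Y ω)|
      ≤ C * (exp (M * max ‖X ω‖ ‖Y ω‖) * ‖X ω - Y ω‖) := fun ω => by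
    rw [← mul_assoc]; exact hφC _ _
  have hφY : Integrable (fun ω => φ (Y ω)) μ := by
    have hfin := hYfin.image φ
    rw [← range_comp] at hfin
    exact memLp_one_iff_integrable.1
      (memLp_of_finite_range (hφ.comp hY).aestronglyMeasurable hfin 1)
  have hφX : Integrable (fun ω => φ (X ω)) μ := by
    have hsub : Integrable (fun ω => φ (X ω) - φ (Y ω)) μ :=
      hWD.mono' ((hφ.comp hX).sub (hφ.comp hY)).aestronglyMeasurable (ae_of_all _ hdiff)
    exact (hsub.add hφY).congr (ae_of_all _ fun ω => sub_add_cancel _ _)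
  calc |∫ ω, φ (X ω) ∂μ - ∫ ω, φ (Y ω) ∂μ| = |∫ ω, (φ (X ω) - φ (Y ω)) ∂μ| := by
        rw [integral_sub hφX hφY]
    _ ≤ ∫ ω, |φ (X ω) - φ (Y ω)| ∂μ := abs_integral_le_integral_abs
    _ ≤ ∫ ω, C * (exp (M * max ‖X ω‖ ‖Y ω‖) * ‖X ω - Y ω‖) ∂μ :=
        integral_mono_of_nonneg (ae_of_all _ fun _ => abs_nonneg _) hWD (ae_of_all _ hdiff)
    _ = C * ∫ ω, exp (M * max ‖X ω‖ ‖Y ω‖) * ‖X ω - Y ω‖ ∂μ := integral_const_mul C _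
    _ ≤ C * ((∫ ω, exp (M * max ‖X ω‖ ‖Y ω‖) ^ 2 ∂μ) ^ (1 / 2 : ℝ)
          * (∫ ω, ‖X ω - Y ω‖ ^ 2 ∂μ) ^ (1 / 2 : ℝ)) := by
        gcongr
        exact integral_mul_le_L2_mul_L2_of_nonneg (ae_of_all _ fun _ => (exp_pos _).le)
          (ae_of_all _ fun _ => norm_nonneg _) hW hD
    _ ≤ C * ((2 * ∫ ω, exp (2 * M * ‖X ω‖) ∂μ) ^ (1 / 2 : ℝ)
          * (∫ ω, ‖X ω - Y ω‖ ^ 2 ∂μ) ^ (1 / 2 : ℝ)) := by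
        gcongr
    _ = _ := by ring

end StationaryQuantization

theorem stmt7_general {d : ℕ}
    {Ω : Type*} [MeasureSpace Ω] [IsProbabilityMeasure (ℙ : Measure Ω)]
    (X : Ω → EuclideanSpace ℝ (Fin d)) (hX : Measurable X)
    (p F : EuclideanSpace ℝ (Fin d) → ℝ)
    (hp_pos : ∀ x, 0 < p x)
    -- Assumption 2
    {α : ℝ} (hα : α ∈ Ioc (0:ℝ) 1)
    (hp_smooth : ContDiff ℝ 2 p)
    (hgrowth1 : ∃ C R : ℝ, 0 < C ∧ ∀ x : EuclideanSpace ℝ (Fin d), R ≤ ‖x‖ →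
      ‖gradient p x‖ / p x ≤ C * ‖x‖ ^ α)
    -- Assumption 3
    (hFpos : ∀ x, 0 ≤ F x)
    (hFLip : ∃ K : ℝ≥0, LipschitzWith K F)
    (hmoments : ∃ a : ℝ, 1 < a ∧ Integrable (fun ω => F (X ω) ^ (4*a)) ℙ ∧
      ∀ M > (0:ℝ),
        Integrable (fun ω => ‖X ω‖ ^ (4*a/(a-1)) + Real.exp (M * ‖X ω‖)) ℙ)
    -- Q, assumed finite everywhere
    (Q : EuclideanSpace ℝ (Fin d) → ℝ)
    (hQ : ∀ θ, Q θ = ∫ ω, F (X ω)^2 * p (X ω) / p (X ω - θ) ∂ℙ) :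
    ∀ R > (0:ℝ), ∃ C > (0:ℝ),
      ∀ Xh : Ω → EuclideanSpace ℝ (Fin d),
        Measurable Xh →
        (Set.range Xh).Finite →
        ((ℙ : Measure Ω)[X | MeasurableSpace.comap Xh inferInstance]
          =ᵐ[(ℙ : Measure Ω)] Xh) →
        ∀ θ : EuclideanSpace ℝ (Fin d), ‖θ‖ ≤ R →
          |Q θ - ∫ ω, F (Xh ω)^2 * p (Xh ω) / p (Xh ω - θ) ∂ℙ|
            ≤ C * (∫ ω, ‖X ω - Xh ω‖^2 ∂ℙ) ^ ((1:ℝ)/2) := by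
  intro R hR
  obtain ⟨_, Rg, -, hgrowth⟩ := hgrowth1
  obtain ⟨B, hB, hlog⟩ := exists_abs_log_sub_log_le hp_pos (hp_smooth.of_le one_le_two)
    hα.1.le hα.2 (R := Rg) fun x hx => by simpa [gradient] using hgrowth x hx
  obtain ⟨K, hK⟩ := hFLip
  obtain ⟨C, M, hC, hM, hφ⟩ := exists_abs_sq_mul_exp_sub_le hB hlog hFpos hK hR.le
  obtain ⟨a, -, -, hmom⟩ := hmoments
  have hexp : ∀ c > 0, Integrable (fun ω => Real.exp (c * ‖X ω‖)) ℙ := fun c hc =>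
    (hmom c hc).mono' (hX.norm.const_mul c).exp.aestronglyMeasurable (ae_of_all _ fun ω => by
      rw [Real.norm_of_nonneg (Real.exp_pos _).le]
      linarith [Real.rpow_nonneg (norm_nonneg (X ω)) (4 * a / (a - 1))])
  have hX2 : MemLp X 2 ℙ := by
    refine (memLp_two_iff_integrable_sq_norm hX.aestronglyMeasurable).2 <|
      ((hexp 1 one_pos).const_mul 2).mono' (hX.norm.pow_const 2).aestronglyMeasurable
        (ae_of_all _ fun ω => ?_)
    rw [Real.norm_of_nonneg (sq_nonneg _), one_mul]
    linarith [Real.pow_div_factorial_le_exp _ (norm_nonneg (X ω)) 2]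
  have hE := integral_exp_pos (hexp (2 * M) (by positivity))
  refine ⟨(C + 1) * (2 * ∫ ω, Real.exp (2 * M * ‖X ω‖)) ^ (1 / 2 : ℝ), by positivity, ?_⟩
  intro Xh hXh hfin hstat θ hθ
  have hrepr : ∀ z, F z ^ 2 * p z / p (z - θ)
      = F z ^ 2 * Real.exp (Real.log (p z) - Real.log (p (z - θ))) := fun z => by
    rw [Real.exp_sub, Real.exp_log (hp_pos z), Real.exp_log (hp_pos _), mul_div_assoc]
  have hFm : Measurable F := hK.continuous.measurable
  have hpm : Measurable p := hp_smooth.continuous.measurable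
  simp only [hQ, hrepr]
  refine (abs_integral_comp_sub_integral_comp_le hXh.comap_le hstat hX hXh hfin hX2 hM.le
    (hexp _ (by positivity)) (by fun_prop) hC (hφ θ hθ)).trans ?_
  gcongr
  linarith

/-- Under Assumptions 1, 2 and 3, for every `R > 0` there is a constant `C > 0` (independent
of the quantizer) such that for every stationary quantization `X̂` of `X`,
`sup_{|θ|≤R} |Q(θ) − Q̂(θ)| ≤ C ‖X − X̂‖₂`, where `Q̂(θ) = E[F²(X̂)p(X̂)/p(X̂−θ)]`. -/
theorem stmt7 {d : ℕ} (hd : 0 < d)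
    {Ω : Type*} [MeasureSpace Ω] [IsProbabilityMeasure (ℙ : Measure Ω)]
    (X : Ω → EuclideanSpace ℝ (Fin d)) (hX : Measurable X)
    (p F : EuclideanSpace ℝ (Fin d) → ℝ) (hF : Measurable F)
    (hp_pos : ∀ x, 0 < p x)
    (hdensity : (ℙ : Measure Ω).map X = volume.withDensity (fun x => ENNReal.ofReal (p x)))
    -- Assumption 1
    (hlogconc : StrictConcaveOn ℝ univ (fun x => Real.log (p x)))
    (hvanish : Tendsto p (cocompact (EuclideanSpace ℝ (Fin d))) (𝓝 0))
    -- Assumption 2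
    {α : ℝ} (hα : α ∈ Ioc (0:ℝ) 1)
    (hp_smooth : ContDiff ℝ 2 p)
    (hgrowth1 : ∃ C R : ℝ, 0 < C ∧ ∀ x : EuclideanSpace ℝ (Fin d), R ≤ ‖x‖ →
      ‖gradient p x‖ / p x ≤ C * ‖x‖ ^ α)
    (hgrowth2 : ∃ C : ℝ, 0 < C ∧ ∀ x : EuclideanSpace ℝ (Fin d), x ≠ 0 →
      ‖fderiv ℝ (fun y => gradient p y) x‖ / p x ≤ C * (‖x‖ ^ (2*α) + ‖x‖ ^ (α - 1)))
    -- Assumption 3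
    (hFpos : ∀ x, 0 ≤ F x)
    (hFconv : ConvexOn ℝ univ F)
    (hFLip : ∃ K : ℝ≥0, LipschitzWith K F)
    (hmoments : ∃ a : ℝ, 1 < a ∧ Integrable (fun ω => F (X ω) ^ (4*a)) ℙ ∧
      ∀ M > (0:ℝ),
        Integrable (fun ω => ‖X ω‖ ^ (4*a/(a-1)) + Real.exp (M * ‖X ω‖)) ℙ)
    -- Q, assumed finite everywhere
    (hint1 : ∀ θ : EuclideanSpace ℝ (Fin d),
      Integrable (fun ω => F (X ω)^2 * p (X ω) / p (X ω - θ)) ℙ)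
    (Q : EuclideanSpace ℝ (Fin d) → ℝ)
    (hQ : ∀ θ, Q θ = ∫ ω, F (X ω)^2 * p (X ω) / p (X ω - θ) ∂ℙ) :
    ∀ R > (0:ℝ), ∃ C > (0:ℝ),
      ∀ Xh : Ω → EuclideanSpace ℝ (Fin d),
        Measurable Xh →
        (Set.range Xh).Finite →
        ((ℙ : Measure Ω)[X | MeasurableSpace.comap Xh inferInstance]
          =ᵐ[(ℙ : Measure Ω)] Xh) →
        ∀ θ : EuclideanSpace ℝ (Fin d), ‖θ‖ ≤ R →
          |Q θ - ∫ ω, F (Xh ω)^2 * p (Xh ω) / p (Xh ω - θ) ∂ℙ|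
            ≤ C * (∫ ω, ‖X ω - Xh ω‖^2 ∂ℙ) ^ ((1:ℝ)/2) :=
  stmt7_general X hX p F hp_pos hα hp_smooth hgrowth1 hFpos hFLip hmoments Q hQ
end

section
/- Let Q : ℝ^d → ℝ be continuous and strictly convex with a unique global minimizer θ*, and let (Q_N)_{N≥1} be convex functions ℝ^d → ℝ converging to Q locally uniformly. If for each N, θ_N is a global minimizer of Q_N, then θ_N → θ* and Q_N(θ_N) → Q(θ*) as N → ∞. -/
open Set Filter Topology Metric

/-!
Fix `ε > 0`. By compactness of the sphere of radius `ε` about the unique minimizer `θ*`, the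
continuous function `Q` stays above some `a > Q θ*` on that sphere, and uniform convergence on the
closed ball of radius `ε` then makes `Q_N` exceed `Q_N θ*` on the sphere for large `N`. If `θ_N` lay
outside that ball, the segment from `θ*` to `θ_N` would cross the sphere, and convexity would bound
`Q_N` there by `max (Q_N θ*) (Q_N θ_N) = Q_N θ*`, a contradiction. Convergence of the minimal values
then follows from local uniform convergence and continuity of `Q` at `θ*`.
-/

section

variable {α : Type*} [MetricSpace α] [ProperSpace α]

theorem tendstoLocallyUniformly_of_forall_closedBall {ι β : Type*} [UniformSpace β]
    {F : ι → α → β} {f : α → β} {p : Filter ι} (c : α)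
    (h : ∀ R > 0, TendstoUniformlyOn F f p (closedBall c R)) : TendstoLocallyUniformly F f p := by
  refine tendstoLocallyUniformly_iff_forall_isCompact.mpr fun K hK => ?_
  obtain ⟨R, hKR⟩ := (isBounded_iff_subset_closedBall c).mp hK.isBounded
  exact (h (max R 1) (by positivity)).mono
    (hKR.trans (closedBall_subset_closedBall (le_max_left _ _)))

theorem exists_lt_forall_sphere_le {Q : α → ℝ} (hQ : Continuous Q) {x₀ : α}
    (hmin : ∀ y ≠ x₀, Q x₀ < Q y) {ε : ℝ} (hε : 0 < ε) :
    ∃ a, Q x₀ < a ∧ ∀ y ∈ sphere x₀ ε, a ≤ Q y :=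
  (isCompact_sphere x₀ ε).exists_forall_le' hQ.continuousOn fun y hy =>
    hmin y (ne_of_mem_sphere hy hε.ne')

end

section

variable {E : Type*} [NormedAddCommGroup E] [NormedSpace ℝ E]

theorem exists_mem_segment_dist_eq (a b : E) {ε : ℝ} (hε : 0 ≤ ε) (hεb : ε ≤ dist a b) :
    ∃ y ∈ segment ℝ a b, dist y a = ε := by
  rcases hε.eq_or_lt with rfl | hε
  · exact ⟨a, left_mem_segment ℝ a b, dist_self a⟩
  have hab : 0 < dist a b := hε.trans_le hεb
  refine ⟨AffineMap.lineMap a b (ε / dist a b), ?_, ?_⟩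
  · rw [segment_eq_image_lineMap]
    exact mem_image_of_mem _ ⟨by positivity, (div_le_one hab).mpr hεb⟩
  · rw [dist_lineMap_left, Real.norm_of_nonneg (by positivity), div_mul_cancel₀ _ hab.ne']

variable [ProperSpace E]

theorem tendsto_minimizers_of_tendstoLocallyUniformly {ι : Type*} {p : Filter ι}
    {Q : E → ℝ} (hQ : Continuous Q) {x₀ : E} (hmin : ∀ y ≠ x₀, Q x₀ < Q y)
    {F : ι → E → ℝ} (hF : ∀ n, ConvexOn ℝ univ (F n)) (hFQ : TendstoLocallyUniformly F Q p)
    {x : ι → E} (hx : ∀ n y, F n (x n) ≤ F n y) : Tendsto x p (𝓝 x₀) := by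
  refine Metric.tendsto_nhds.mpr fun ε hε => ?_
  obtain ⟨a, hQa, ha⟩ := exists_lt_forall_sphere_le hQ hmin hε
  have hball : TendstoUniformlyOn F Q p (closedBall x₀ ε) :=
    tendstoLocallyUniformly_iff_forall_isCompact.mp hFQ _ (isCompact_closedBall x₀ ε)
  filter_upwards [tendstoUniformlyOn_iff.mp hball ((a - Q x₀) / 2) (by linarith)]
    with n hn
  by_contra hfar
  obtain ⟨y, hy_seg, hy_dist⟩ :=
    exists_mem_segment_dist_eq x₀ (x n) hε.le (by rw [dist_comm]; exact not_lt.mp hfar)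
  have hFy : F n y ≤ F n x₀ :=
    ((hF n).le_on_segment (mem_univ _) (mem_univ _) hy_seg).trans (max_le le_rfl (hx n x₀))
  have hx₀ := hn x₀ (mem_closedBall_self hε.le)
  have hy := hn y (mem_closedBall.mpr hy_dist.le)
  have hQy := ha y (mem_sphere.mpr hy_dist)
  rw [Real.dist_eq, abs_lt] at hx₀ hy
  linarith [hx₀.1, hy.2]

end

theorem stmt9_general {d : ℕ} (Q : EuclideanSpace ℝ (Fin d) → ℝ)
    (hQcont : Continuous Q)
    (θstar : EuclideanSpace ℝ (Fin d))
    (hmin : ∀ θ, Q θstar ≤ Q θ)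
    (huniq : ∀ θ, (∀ θ', Q θ ≤ Q θ') → θ = θstar)
    (QN : ℕ → EuclideanSpace ℝ (Fin d) → ℝ)
    (hQNconv : ∀ N, ConvexOn ℝ univ (QN N))
    (hloc : ∀ R > 0, TendstoUniformlyOn QN Q atTop (Metric.closedBall 0 R))
    (θN : ℕ → EuclideanSpace ℝ (Fin d))
    (hθN : ∀ N θ, QN N (θN N) ≤ QN N θ) :
    Tendsto θN atTop (𝓝 θstar) ∧ Tendsto (fun N => QN N (θN N)) atTop (𝓝 (Q θstar)) := by
  have hstrict : ∀ θ ≠ θstar, Q θstar < Q θ := fun θ hθ =>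
    (hmin θ).lt_of_ne fun h => hθ (huniq θ fun θ' => h ▸ hmin θ')
  have hlu := tendstoLocallyUniformly_of_forall_closedBall 0 hloc
  have hconv := tendsto_minimizers_of_tendstoLocallyUniformly hQcont hstrict hQNconv hlu hθN
  exact ⟨hconv, hlu.tendsto_comp hQcont.continuousAt hconv⟩

/-- If `Q` is continuous and strictly convex with unique global minimizer `θ*`, and convex
functions `Q_N` converge to `Q` locally uniformly (uniformly on every closed ball), then any
sequence of global minimizers `θ_N` of `Q_N` converges to `θ*`, and `Q_N(θ_N) → Q(θ*)`. -/
theorem stmt9 {d : ℕ} (Q : EuclideanSpace ℝ (Fin d) → ℝ)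
    (hQcont : Continuous Q)
    (hQconv : StrictConvexOn ℝ univ Q)
    (θstar : EuclideanSpace ℝ (Fin d))
    (hmin : ∀ θ, Q θstar ≤ Q θ)
    (huniq : ∀ θ, (∀ θ', Q θ ≤ Q θ') → θ = θstar)
    (QN : ℕ → EuclideanSpace ℝ (Fin d) → ℝ)
    (hQNconv : ∀ N, ConvexOn ℝ univ (QN N))
    (hloc : ∀ R > 0, TendstoUniformlyOn QN Q atTop (Metric.closedBall 0 R))
    (θN : ℕ → EuclideanSpace ℝ (Fin d))
    (hθN : ∀ N θ, QN N (θN N) ≤ QN N θ) :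
    Tendsto θN atTop (𝓝 θstar) ∧ Tendsto (fun N => QN N (θN N)) atTop (𝓝 (Q θstar)) :=
  stmt9_general Q hQcont θstar hmin huniq QN hQNconv hloc θN hθN
end

section
/- Let X be an ℝ^d-valued random vector in L² and X̂ a stationary quantization of X (X̂ takes finitely many values and E[X | X̂] = X̂ a.s.). If F : ℝ^d → ℝ is differentiable with an α-Hölder gradient DF (α ∈ (0,1]) with Hölder constant [DF]_α, and F(X), F(X̂) are integrable, then |E[F(X)] − E[F(X̂)]| ≤ [DF]_α ‖X − X̂‖₂^{1+α}, where ‖Y‖₂ = (E|Y|²)^{1/2}. -/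
/-!
Taylor's formula with an `α`-Hölder gradient gives
`|F x - F y - ⟪∇F y, x - y⟫| ≤ L ‖x - y‖ ^ (1 + α)`. Apply it at `x = X`, `y = X̂`: the
first-order term `⟪∇F X̂, X - X̂⟫` has zero mean, because `∇F X̂` is `σ(X̂)`-measurable and can be
pulled out of `E[X - X̂ | X̂] = 0`. The remainder is at most `L E‖X - X̂‖ ^ (1 + α)`, which
Jensen's inequality for the concave map `t ↦ t ^ ((1 + α) / 2)` bounds by `L ‖X - X̂‖₂ ^ (1 + α)`.
-/

open MeasureTheory Set
open scoped ENNReal ProbabilityTheory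

open InnerProductSpace
open scoped RealInnerProductSpace

section Holder

variable {E G : Type*} [NormedAddCommGroup E] [NormedAddCommGroup G]

theorem nonneg_of_norm_sub_le_mul_rpow [Nontrivial E] {g : E → G} {L α : ℝ}
    (hL : ∀ x y, ‖g x - g y‖ ≤ L * ‖x - y‖ ^ α) : 0 ≤ L := by
  obtain ⟨x, y, hxy⟩ := exists_pair_ne E
  have hpos : 0 < ‖x - y‖ ^ α := Real.rpow_pos_of_pos (norm_pos_iff.2 (sub_ne_zero.2 hxy)) α
  exact (mul_nonneg_iff_of_pos_right hpos).1 ((norm_nonneg _).trans (hL x y))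

variable [NormedSpace ℝ E] [NormedSpace ℝ G]

theorem norm_sub_sub_fderiv_le_mul_rpow {F : E → G} (hF : Differentiable ℝ F) {L α : ℝ}
    (hL0 : 0 ≤ L) (hα : 0 ≤ α)
    (hL : ∀ x y, ‖fderiv ℝ F x - fderiv ℝ F y‖ ≤ L * ‖x - y‖ ^ α) (x y : E) :
    ‖F x - F y - fderiv ℝ F y (x - y)‖ ≤ L * ‖x - y‖ ^ (1 + α) := by
  have hbound : ∀ z ∈ Metric.closedBall y ‖x - y‖,
      ‖fderiv ℝ F z - fderiv ℝ F y‖ ≤ L * ‖x - y‖ ^ α := fun z hz =>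
    (hL z y).trans (by gcongr; exact mem_closedBall_iff_norm.1 hz)
  calc ‖F x - F y - fderiv ℝ F y (x - y)‖ ≤ L * ‖x - y‖ ^ α * ‖x - y‖ :=
        (convex_closedBall y _).norm_image_sub_le_of_norm_fderiv_le' (fun z _ => hF z) hbound
          (Metric.mem_closedBall_self (norm_nonneg _)) (mem_closedBall_iff_norm.2 le_rfl)
    _ = L * ‖x - y‖ ^ (1 + α) := by
      rw [Real.rpow_add' (norm_nonneg _) (by positivity), Real.rpow_one]; ring

end Holder

section Gradient

variable {E : Type*} [NormedAddCommGroup E] [InnerProductSpace ℝ E] [CompleteSpace E]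

theorem abs_sub_sub_inner_gradient_le_mul_rpow {F : E → ℝ} (hF : Differentiable ℝ F) {L α : ℝ}
    (hL0 : 0 ≤ L) (hα : 0 ≤ α)
    (hL : ∀ x y, ‖gradient F x - gradient F y‖ ≤ L * ‖x - y‖ ^ α) (x y : E) :
    |F x - F y - ⟪gradient F y, x - y⟫| ≤ L * ‖x - y‖ ^ (1 + α) := by
  have hfderiv : ∀ z w, ‖fderiv ℝ F z - fderiv ℝ F w‖ = ‖gradient F z - gradient F w‖ :=
    fun z w => by rw [gradient, gradient, ← map_sub, LinearIsometryEquiv.norm_map]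
  rw [gradient, toDual_symm_apply, ← Real.norm_eq_abs]
  exact norm_sub_sub_fderiv_le_mul_rpow hF hL0 hα (fun z w => (hfderiv z w).trans_le (hL z w)) x y

theorem measurable_gradient [MeasurableSpace E] [BorelSpace E] (F : E → ℝ) :
    Measurable (gradient F) :=
  (toDual ℝ E).symm.continuous.measurable.comp (measurable_fderiv ℝ F)

end Gradient

section Moments

variable {Ω E : Type*} {mΩ : MeasurableSpace Ω} {μ : Measure Ω} [NormedAddCommGroup E]

theorem MeasureTheory.MemLp.integrable_norm_rpow_of_le [IsFiniteMeasure μ] {f : Ω → E}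
    {p : ℝ} {q : ℝ≥0∞} (hf : MemLp f q μ) (hp : 0 ≤ p) (hpq : p ≤ q.toReal) :
    Integrable (fun ω => ‖f ω‖ ^ p) μ := by
  simpa [ENNReal.toReal_ofReal hp] using
    (hf.mono_exponent (ENNReal.ofReal_le_of_le_toReal hpq)).integrable_norm_rpow'

theorem integral_norm_rpow_le_integral_norm_sq_rpow [IsProbabilityMeasure μ] {f : Ω → E}
    (hf : MemLp f 2 μ) {p : ℝ} (hp0 : 0 ≤ p) (hp2 : p ≤ 2) :
    ∫ ω, ‖f ω‖ ^ p ∂μ ≤ (∫ ω, ‖f ω‖ ^ 2 ∂μ) ^ (p / 2) := by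
  have hsq : (fun ω => ‖f ω‖ ^ p) = fun ω => (‖f ω‖ ^ 2) ^ (p / 2) := funext fun ω => by
    rw [← Real.rpow_natCast, ← Real.rpow_mul (norm_nonneg _)]; ring_nf
  have hpf : Integrable (fun ω => ‖f ω‖ ^ p) μ :=
    hf.integrable_norm_rpow_of_le hp0 (by simpa using hp2)
  rw [hsq] at hpf ⊢
  exact (Real.concaveOn_rpow (by positivity) (by linarith)).le_map_integral
    (Real.continuous_rpow_const (by positivity)).continuousOn isClosed_Ici
    (ae_of_all _ fun ω => mem_Ici.2 (sq_nonneg _))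
    ((memLp_two_iff_integrable_sq_norm hf.1).1 hf) hpf

end Moments

section CondExp

variable {Ω E : Type*} {m mΩ : MeasurableSpace Ω} {μ : Measure Ω}
  [NormedAddCommGroup E] [InnerProductSpace ℝ E] [CompleteSpace E]

theorem integral_inner_sub_eq_zero_of_condExp_ae_eq [IsFiniteMeasure μ] (hm : m ≤ mΩ)
    {f X Y : Ω → E} (hf : StronglyMeasurable[m] f) (hX : Integrable X μ)
    (hXY : μ[X | m] =ᵐ[μ] Y) (hfXY : Integrable (fun ω => ⟪f ω, X ω - Y ω⟫) μ) :
    ∫ ω, ⟪f ω, X ω - Y ω⟫ ∂μ = 0 := by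
  have hY : Integrable Y μ := integrable_condExp.congr hXY
  have hcondY : μ[Y | m] =ᵐ[μ] Y := calc
    μ[Y | m] =ᵐ[μ] μ[μ[X | m] | m] := condExp_congr_ae hXY.symm
    _ = μ[X | m] := condExp_of_stronglyMeasurable hm stronglyMeasurable_condExp integrable_condExp
    _ =ᵐ[μ] Y := hXY
  have hcond : μ[X - Y | m] =ᵐ[μ] 0 := by
    filter_upwards [condExp_sub hX hY m, hXY, hcondY] with ω h hX' hY'
    simp [h, hX', hY']
  calc ∫ ω, ⟪f ω, X ω - Y ω⟫ ∂μ = ∫ ω, μ[fun ω => ⟪f ω, X ω - Y ω⟫ | m] ω ∂μ :=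
        (integral_condExp hm).symm
    _ = ∫ ω, ⟪f ω, μ[X - Y | m] ω⟫ ∂μ :=
        integral_congr_ae (condExp_bilin_of_stronglyMeasurable_left (innerSL ℝ) hf hfXY (hX.sub hY))
    _ = 0 := by
        rw [integral_congr_ae (g := fun _ => (0 : ℝ)) (hcond.mono fun ω h => by simp [h]),
          integral_zero]

end CondExp

section Quantization

variable {Ω E : Type*} {m mΩ : MeasurableSpace Ω} {μ : Measure Ω} [IsProbabilityMeasure μ]
  [NormedAddCommGroup E] [InnerProductSpace ℝ E] [CompleteSpace E]
  [MeasurableSpace E] [BorelSpace E] [SecondCountableTopology E]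

theorem abs_integral_comp_sub_integral_comp_le_of_condExp_ae_eq (hm : m ≤ mΩ) {X Y : Ω → E}
    (hX : MemLp X 2 μ) (hY : Measurable[m] Y) (hXY : μ[X | m] =ᵐ[μ] Y)
    {F : E → ℝ} (hF : Differentiable ℝ F) {α L : ℝ} (hα0 : 0 ≤ α) (hα1 : α ≤ 1)
    (hL : ∀ x y, ‖gradient F x - gradient F y‖ ≤ L * ‖x - y‖ ^ α)
    (hFX : Integrable (fun ω => F (X ω)) μ) (hFY : Integrable (fun ω => F (Y ω)) μ) :
    |(∫ ω, F (X ω) ∂μ) - ∫ ω, F (Y ω) ∂μ|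
      ≤ L * ((∫ ω, ‖X ω - Y ω‖ ^ 2 ∂μ) ^ ((1 : ℝ) / 2)) ^ (1 + α) := by
  -- On a trivial space the Hölder bound holds for every `L`, negative ones included.
  rcases subsingleton_or_nontrivial E with hE | hE
  · obtain rfl : X = Y := funext fun _ => Subsingleton.elim _ _
    simp [Real.zero_rpow (by positivity : 1 + α ≠ 0)]
  have hL0 : 0 ≤ L := nonneg_of_norm_sub_le_mul_rpow hL
  have hD : MemLp (fun ω => X ω - Y ω) 2 μ := hX.sub ((hX.condExp one_le_two).ae_eq hXY)
  have hDpow : Integrable (fun ω => ‖X ω - Y ω‖ ^ (1 + α)) μ :=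
    hD.integrable_norm_rpow_of_le (by positivity) (by norm_num; linarith)
  have hgY : StronglyMeasurable[m] fun ω => gradient F (Y ω) :=
    ((measurable_gradient F).comp hY).stronglyMeasurable
  have htaylor : ∀ ω, |F (X ω) - F (Y ω) - ⟪gradient F (Y ω), X ω - Y ω⟫|
      ≤ L * ‖X ω - Y ω‖ ^ (1 + α) := fun ω =>
    abs_sub_sub_inner_gradient_le_mul_rpow hF hL0 hα0 hL (X ω) (Y ω)
  have hinner : Integrable (fun ω => ⟪gradient F (Y ω), X ω - Y ω⟫) μ := by
    refine ((hFX.sub hFY).norm.add (hDpow.const_mul L)).mono'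
      ((hgY.mono hm).aestronglyMeasurable.inner hD.1) (ae_of_all _ fun ω => ?_)
    have := abs_sub (F (X ω) - F (Y ω)) (F (X ω) - F (Y ω) - ⟪gradient F (Y ω), X ω - Y ω⟫)
    rw [sub_sub_cancel] at this
    simp only [Real.norm_eq_abs, Pi.add_apply, Pi.sub_apply]
    linarith [htaylor ω]
  have hzero : ∫ ω, ⟪gradient F (Y ω), X ω - Y ω⟫ ∂μ = 0 :=
    integral_inner_sub_eq_zero_of_condExp_ae_eq hm hgY (hX.integrable one_le_two) hXY hinner
  calc |(∫ ω, F (X ω) ∂μ) - ∫ ω, F (Y ω) ∂μ|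
      = |∫ ω, (F (X ω) - F (Y ω) - ⟪gradient F (Y ω), X ω - Y ω⟫) ∂μ| := by
        rw [integral_sub (by exact hFX.sub hFY) hinner, integral_sub hFX hFY, hzero, sub_zero]
    _ ≤ ∫ ω, |F (X ω) - F (Y ω) - ⟪gradient F (Y ω), X ω - Y ω⟫| ∂μ :=
        abs_integral_le_integral_abs
    _ ≤ ∫ ω, L * ‖X ω - Y ω‖ ^ (1 + α) ∂μ :=
        integral_mono (((hFX.sub hFY).sub hinner).abs) (hDpow.const_mul L) htaylor
    _ = L * ∫ ω, ‖X ω - Y ω‖ ^ (1 + α) ∂μ := integral_const_mul L _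
    _ ≤ L * (∫ ω, ‖X ω - Y ω‖ ^ 2 ∂μ) ^ ((1 + α) / 2) := by
        gcongr
        exact integral_norm_rpow_le_integral_norm_sq_rpow hD (by positivity) (by linarith)
    _ = L * ((∫ ω, ‖X ω - Y ω‖ ^ 2 ∂μ) ^ ((1 : ℝ) / 2)) ^ (1 + α) := by
        rw [← Real.rpow_mul (integral_nonneg fun ω => by positivity)]
        ring_nf

end Quantization

theorem stmt14_general {d : ℕ} {Ω : Type*} [MeasureSpace Ω] [IsProbabilityMeasure (ℙ : Measure Ω)]
    (X Xh : Ω → EuclideanSpace ℝ (Fin d))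
    (hX : Measurable X) (hXh : Measurable Xh)
    (hX2 : Integrable (fun ω => ‖X ω‖^2) ℙ)
    (hstat : (ℙ : Measure Ω)[X | MeasurableSpace.comap Xh inferInstance] =ᵐ[(ℙ : Measure Ω)] Xh)
    (F : EuclideanSpace ℝ (Fin d) → ℝ)
    (hF : Differentiable ℝ F)
    (α L : ℝ) (hα : α ∈ Ioc (0:ℝ) 1)
    (hL : ∀ x y, ‖gradient F x - gradient F y‖ ≤ L * ‖x - y‖ ^ α)
    (hFX : Integrable (fun ω => F (X ω)) ℙ)
    (hFXh : Integrable (fun ω => F (Xh ω)) ℙ) :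
    |(∫ ω, F (X ω) ∂ℙ) - ∫ ω, F (Xh ω) ∂ℙ|
      ≤ L * ((∫ ω, ‖X ω - Xh ω‖^2 ∂ℙ) ^ ((1:ℝ)/2)) ^ (1 + α) :=
  abs_integral_comp_sub_integral_comp_le_of_condExp_ae_eq hXh.comap_le
    ((memLp_two_iff_integrable_sq_norm hX.aestronglyMeasurable).2 hX2) (comap_measurable Xh)
    hstat hF hα.1.le hα.2 hL hFX hFXh

/-- Quadrature error bound for stationary quantization and a differentiable functional with
`α`-Hölder gradient: `|E[F(X)] − E[F(X̂)]| ≤ [DF]_α ‖X − X̂‖₂^{1+α}`. -/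
theorem stmt14 {d : ℕ} {Ω : Type*} [MeasureSpace Ω] [IsProbabilityMeasure (ℙ : Measure Ω)]
    (X Xh : Ω → EuclideanSpace ℝ (Fin d))
    (hX : Measurable X) (hXh : Measurable Xh)
    (hX2 : Integrable (fun ω => ‖X ω‖^2) ℙ)
    (hfin : (Set.range Xh).Finite)
    (hstat : (ℙ : Measure Ω)[X | MeasurableSpace.comap Xh inferInstance] =ᵐ[(ℙ : Measure Ω)] Xh)
    (F : EuclideanSpace ℝ (Fin d) → ℝ)
    (hF : Differentiable ℝ F)
    (α L : ℝ) (hα : α ∈ Ioc (0:ℝ) 1)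
    (hL : ∀ x y, ‖gradient F x - gradient F y‖ ≤ L * ‖x - y‖ ^ α)
    (hLmin : ∀ L' : ℝ, (∀ x y, ‖gradient F x - gradient F y‖ ≤ L' * ‖x - y‖ ^ α) → L ≤ L')
    (hFX : Integrable (fun ω => F (X ω)) ℙ)
    (hFXh : Integrable (fun ω => F (Xh ω)) ℙ) :
    |(∫ ω, F (X ω) ∂ℙ) - ∫ ω, F (Xh ω) ∂ℙ|
      ≤ L * ((∫ ω, ‖X ω - Xh ω‖^2 ∂ℙ) ^ ((1:ℝ)/2)) ^ (1 + α) :=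
  stmt14_general X Xh hX hXh hX2 hstat F hF α L hα hL hFX hFXh
end

section
/- Let X be an ℝ^d-valued random vector in L² and X̂ a stationary quantization of X. Let θ : ℝ^d → ℝ₊ be a nonnegative convex function with θ(X) ∈ L², and let F : ℝ^d → ℝ satisfy |F(x) − F(y)| ≤ [F]_Lip |x − y| (θ(x) + θ(y)) for all x, y. Then F(X) is integrable and |E[F(X)] − E[F(X̂)]| ≤ 2 [F]_Lip ‖X − X̂‖₂ ‖θ(X)‖₂. -/
open MeasureTheory Set
open scoped ProbabilityTheory

/-! The growth condition bounds `|F(X) - F(X̂)|` pointwise by `[F]_Lip |X - X̂| (θ(X) + θ(X̂))`,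
and Cauchy–Schwarz bounds the expectation of this by `[F]_Lip ‖X - X̂‖₂ (‖θ(X)‖₂ + ‖θ(X̂)‖₂)`.
Stationarity says `X̂ = E[X | X̂]`, so the conditional Jensen inequality for the convex function
`θ²` gives `‖θ(X̂)‖₂ ≤ ‖θ(X)‖₂`. -/

theorem integral_mul_le_of_memLp_two {Ω : Type*} [MeasurableSpace Ω] {μ : Measure Ω}
    {f g : Ω → ℝ} (hf0 : 0 ≤ᵐ[μ] f) (hg0 : 0 ≤ᵐ[μ] g)
    (hf : MemLp f 2 μ) (hg : MemLp g 2 μ) :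
    ∫ ω, f ω * g ω ∂μ ≤ (∫ ω, f ω ^ 2 ∂μ) ^ ((1:ℝ)/2) * (∫ ω, g ω ^ 2 ∂μ) ^ ((1:ℝ)/2) := by
  simpa using integral_mul_le_Lp_mul_Lq_of_nonneg Real.HolderConjugate.two_two hf0 hg0
    (by simpa using hf) (by simpa using hg)

theorem integral_comp_le_of_condExp_ae_eq_s15 {Ω E : Type*} {m m0 : MeasurableSpace Ω}
    {μ : Measure[m0] Ω} [NormedAddCommGroup E] [NormedSpace ℝ E] [FiniteDimensional ℝ E]
    (hm : m ≤ m0) [SigmaFinite (μ.trim hm)] {X Y : Ω → E} (hY : μ[X | m] =ᵐ[μ] Y)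
    {φ : E → ℝ} (hφ : ConvexOn ℝ univ φ)
    (hφ0 : ∀ x, 0 ≤ φ x) (hX : Integrable X μ) (hφX : Integrable (fun ω => φ (X ω)) μ) :
    Integrable (fun ω => φ (Y ω)) μ ∧ ∫ ω, φ (Y ω) ∂μ ≤ ∫ ω, φ (X ω) ∂μ := by
  have hjensen : (fun ω => φ (Y ω)) ≤ᵐ[μ] μ[fun ω => φ (X ω) | m] := by
    filter_upwards [hφ.map_condExp_le_of_finiteDimensional hm hX hφX, hY] with ω h hω
    rwa [← hω]
  have hYm : AEStronglyMeasurable Y μ := integrable_condExp.aestronglyMeasurable.congr hY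
  have hφY : Integrable (fun ω => φ (Y ω)) μ :=
    integrable_condExp.mono_nonneg
      ((continuousOn_univ.1 (hφ.continuousOn isOpen_univ)).comp_aestronglyMeasurable hYm)
      (ae_of_all _ fun _ => hφ0 _) hjensen
  refine ⟨hφY, ?_⟩
  calc ∫ ω, φ (Y ω) ∂μ ≤ ∫ ω, μ[fun ω => φ (X ω) | m] ω ∂μ :=
        integral_mono_ae hφY integrable_condExp hjensen
    _ = ∫ ω, φ (X ω) ∂μ := integral_condExp hm

def LipschitzWithGrowth {E : Type*} [NormedAddCommGroup E] (L : ℝ) (θ F : E → ℝ) : Prop :=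
  ∀ x y, |F x - F y| ≤ L * ‖x - y‖ * (θ x + θ y)

namespace LipschitzWithGrowth

section Pointwise

variable {E : Type*} [NormedAddCommGroup E] {θ F : E → ℝ} {L : ℝ}

theorem continuous (hF : LipschitzWithGrowth L θ F) (hθ : Continuous θ) : Continuous F := by
  refine continuous_iff_continuousAt.2 fun x => tendsto_iff_norm_sub_tendsto_zero.2 ?_
  have hbound : Filter.Tendsto (fun y => L * ‖y - x‖ * (θ y + θ x)) (nhds x) (nhds 0) := by
    simpa using ((by fun_prop : Continuous fun y => L * ‖y - x‖ * (θ y + θ x)).tendsto x)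
  exact squeeze_zero (fun _ => norm_nonneg _) (fun y => hF y x) hbound

theorem abs_le (hF : LipschitzWithGrowth L θ F) (x : E) :
    |F x| ≤ |F 0| + L * (‖x‖ * θ x + ‖x‖ * θ 0) := by
  have h := hF x 0
  rw [sub_zero] at h
  linarith [abs_sub_abs_le_abs_sub (F x) (F 0)]

theorem eq_of_nonpos (hF : LipschitzWithGrowth L θ F) (hL : L ≤ 0) (hθ : ∀ x, 0 ≤ θ x)
    (x y : E) : F x = F y := by
  have : L * ‖x - y‖ * (θ x + θ y) ≤ 0 :=
    mul_nonpos_of_nonpos_of_nonneg (mul_nonpos_of_nonpos_of_nonneg hL (norm_nonneg _))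
      (add_nonneg (hθ x) (hθ y))
  exact sub_eq_zero.1 (abs_nonpos_iff.1 ((hF x y).trans this))

theorem eq_zero_or_subsingleton_of_neg (hF : LipschitzWithGrowth L θ F) (hL : L < 0)
    (hθ : ∀ x, 0 ≤ θ x) : θ = 0 ∨ Subsingleton E := by
  refine or_iff_not_imp_right.2 fun hE => funext fun x => show θ x = 0 from ?_
  have := not_subsingleton_iff_nontrivial.1 hE
  obtain ⟨y, hyx⟩ := exists_ne x
  have hneg : L * ‖x - y‖ < 0 :=
    mul_neg_of_neg_of_pos hL (norm_pos_iff.2 (sub_ne_zero.2 hyx.symm))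
  have hsum : θ x + θ y ≤ 0 := nonpos_of_mul_nonneg_right ((abs_nonneg _).trans (hF x y)) hneg
  exact le_antisymm (by linarith [hθ y]) (hθ x)

end Pointwise

section Expectation

variable {Ω E : Type*} [MeasurableSpace Ω] {μ : Measure Ω} [IsFiniteMeasure μ]
  [NormedAddCommGroup E] {θ F : E → ℝ} {L : ℝ} {X Y : Ω → E}

theorem integrable_comp (hF : LipschitzWithGrowth L θ F) (hθ : Continuous θ)
    (hX : MemLp X 2 μ) (hθX : MemLp (fun ω => θ (X ω)) 2 μ) :
    Integrable (fun ω => F (X ω)) μ := by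
  have hXθ : Integrable (fun ω => ‖X ω‖ * θ (X ω)) μ := hX.norm.integrable_mul hθX
  have hX1 : Integrable (fun ω => ‖X ω‖ * θ 0) μ := (hX.norm.integrable one_le_two).mul_const _
  exact ((integrable_const |F 0|).add ((hXθ.add hX1).const_mul L)).mono'
    ((hF.continuous hθ).comp_aestronglyMeasurable hX.1) (ae_of_all _ fun ω => hF.abs_le (X ω))

theorem abs_integral_sub_le (hF : LipschitzWithGrowth L θ F) (hL : 0 ≤ L)
    (hθ0 : ∀ x, 0 ≤ θ x) (hθ : Continuous θ)
    (hX : MemLp X 2 μ) (hY : MemLp Y 2 μ)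
    (hθX : MemLp (fun ω => θ (X ω)) 2 μ) (hθY : MemLp (fun ω => θ (Y ω)) 2 μ) :
    |(∫ ω, F (X ω) ∂μ) - ∫ ω, F (Y ω) ∂μ|
      ≤ L * (∫ ω, ‖X ω - Y ω‖ ^ 2 ∂μ) ^ ((1:ℝ)/2)
          * ((∫ ω, θ (X ω) ^ 2 ∂μ) ^ ((1:ℝ)/2) + (∫ ω, θ (Y ω) ^ 2 ∂μ) ^ ((1:ℝ)/2)) := by
  have hXY : MemLp (fun ω => ‖X ω - Y ω‖) 2 μ := (hX.sub hY).norm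
  have hFX := hF.integrable_comp hθ hX hθX
  have hFY := hF.integrable_comp hθ hY hθY
  have hXYθX : Integrable (fun ω => ‖X ω - Y ω‖ * θ (X ω)) μ := hXY.integrable_mul hθX
  have hXYθY : Integrable (fun ω => ‖X ω - Y ω‖ * θ (Y ω)) μ := hXY.integrable_mul hθY
  have hXY0 : 0 ≤ᵐ[μ] fun ω => ‖X ω - Y ω‖ := ae_of_all _ fun _ => norm_nonneg _
  calc |(∫ ω, F (X ω) ∂μ) - ∫ ω, F (Y ω) ∂μ| = |∫ ω, (F (X ω) - F (Y ω)) ∂μ| := by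
        rw [integral_sub hFX hFY]
    _ ≤ ∫ ω, |F (X ω) - F (Y ω)| ∂μ := abs_integral_le_integral_abs
    _ ≤ ∫ ω, (L * (‖X ω - Y ω‖ * θ (X ω)) + L * (‖X ω - Y ω‖ * θ (Y ω))) ∂μ :=
        integral_mono (hFX.sub hFY).abs ((hXYθX.const_mul L).add (hXYθY.const_mul L))
          fun ω => by linarith [hF (X ω) (Y ω)]
    _ = L * ((∫ ω, ‖X ω - Y ω‖ * θ (X ω) ∂μ) + ∫ ω, ‖X ω - Y ω‖ * θ (Y ω) ∂μ) := by
        rw [integral_add (hXYθX.const_mul L) (hXYθY.const_mul L), integral_const_mul,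
          integral_const_mul, mul_add]
    _ ≤ L * ((∫ ω, ‖X ω - Y ω‖ ^ 2 ∂μ) ^ ((1:ℝ)/2) * (∫ ω, θ (X ω) ^ 2 ∂μ) ^ ((1:ℝ)/2)
          + (∫ ω, ‖X ω - Y ω‖ ^ 2 ∂μ) ^ ((1:ℝ)/2) * (∫ ω, θ (Y ω) ^ 2 ∂μ) ^ ((1:ℝ)/2)) := by
        gcongr
        · exact integral_mul_le_of_memLp_two hXY0 (ae_of_all _ fun _ => hθ0 _) hXY hθX
        · exact integral_mul_le_of_memLp_two hXY0 (ae_of_all _ fun _ => hθ0 _) hXY hθY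
    _ = _ := by ring

theorem abs_integral_sub_le_of_integral_sq_le (hF : LipschitzWithGrowth L θ F)
    (hθ0 : ∀ x, 0 ≤ θ x) (hθ : Continuous θ)
    (hX : MemLp X 2 μ) (hY : MemLp Y 2 μ)
    (hθX : MemLp (fun ω => θ (X ω)) 2 μ) (hθY : MemLp (fun ω => θ (Y ω)) 2 μ)
    (hθYX : ∫ ω, θ (Y ω) ^ 2 ∂μ ≤ ∫ ω, θ (X ω) ^ 2 ∂μ) :
    |(∫ ω, F (X ω) ∂μ) - ∫ ω, F (Y ω) ∂μ|
      ≤ 2 * L * (∫ ω, ‖X ω - Y ω‖ ^ 2 ∂μ) ^ ((1:ℝ)/2) * (∫ ω, θ (X ω) ^ 2 ∂μ) ^ ((1:ℝ)/2) := by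
  rcases lt_or_ge L 0 with hL | hL
  · have hFXY : ∫ ω, F (X ω) ∂μ = ∫ ω, F (Y ω) ∂μ :=
      integral_congr_ae (ae_of_all _ fun ω => hF.eq_of_nonpos hL.le hθ0 _ _)
    rw [hFXY, sub_self, abs_zero]
    rcases hF.eq_zero_or_subsingleton_of_neg hL hθ0 with rfl | hE
    · simp
    · have hXY : ∀ ω, X ω - Y ω = 0 := fun _ => Subsingleton.elim _ _
      simp [hXY]
  · have hYX : (∫ ω, θ (Y ω) ^ 2 ∂μ) ^ ((1:ℝ)/2) ≤ (∫ ω, θ (X ω) ^ 2 ∂μ) ^ ((1:ℝ)/2) :=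
      Real.rpow_le_rpow (integral_nonneg fun _ => sq_nonneg _) hθYX (by norm_num)
    calc _ ≤ _ := hF.abs_integral_sub_le hL hθ0 hθ hX hY hθX hθY
      _ ≤ L * (∫ ω, ‖X ω - Y ω‖ ^ 2 ∂μ) ^ ((1:ℝ)/2)
            * ((∫ ω, θ (X ω) ^ 2 ∂μ) ^ ((1:ℝ)/2) + (∫ ω, θ (X ω) ^ 2 ∂μ) ^ ((1:ℝ)/2)) := by
          gcongr
      _ = _ := by ring

end Expectation

end LipschitzWithGrowth

theorem stmt15_general {d : ℕ} {Ω : Type*} [MeasureSpace Ω] [IsProbabilityMeasure (ℙ : Measure Ω)]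
    (X Xh : Ω → EuclideanSpace ℝ (Fin d))
    (hX : Measurable X) (hXh : Measurable Xh)
    (hX2 : Integrable (fun ω => ‖X ω‖^2) ℙ)
    (hstat : (ℙ : Measure Ω)[X | MeasurableSpace.comap Xh inferInstance] =ᵐ[(ℙ : Measure Ω)] Xh)
    (θf : EuclideanSpace ℝ (Fin d) → ℝ)
    (hθconv : ConvexOn ℝ univ θf)
    (hθnonneg : ∀ x, 0 ≤ θf x)
    (hθL2 : Integrable (fun ω => (θf (X ω))^2) ℙ)
    (F : EuclideanSpace ℝ (Fin d) → ℝ)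
    (L : ℝ)
    (hgrowth : ∀ x y, |F x - F y| ≤ L * ‖x - y‖ * (θf x + θf y)) :
    Integrable (fun ω => F (X ω)) ℙ ∧
    |(∫ ω, F (X ω) ∂ℙ) - ∫ ω, F (Xh ω) ∂ℙ|
      ≤ 2 * L * ((∫ ω, ‖X ω - Xh ω‖^2 ∂ℙ) ^ ((1:ℝ)/2))
          * ((∫ ω, (θf (X ω))^2 ∂ℙ) ^ ((1:ℝ)/2)) := by
  have hθ : Continuous θf := continuousOn_univ.1 (hθconv.continuousOn isOpen_univ)
  have hXL2 : MemLp X 2 ℙ := (memLp_two_iff_integrable_sq_norm hX.aestronglyMeasurable).2 hX2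
  have hθXL2 : MemLp (fun ω => θf (X ω)) 2 ℙ :=
    (memLp_two_iff_integrable_sq (hθ.comp_aestronglyMeasurable hX.aestronglyMeasurable)).2 hθL2
  obtain ⟨hθXh2, hθXhX⟩ := integral_comp_le_of_condExp_ae_eq_s15 hXh.comap_le hstat
    (hθconv.pow (fun x _ => hθnonneg x) 2) (fun x => sq_nonneg (θf x))
    (hXL2.integrable one_le_two) hθL2
  have hθXhL2 : MemLp (fun ω => θf (Xh ω)) 2 ℙ :=
    (memLp_two_iff_integrable_sq (hθ.comp_aestronglyMeasurable hXh.aestronglyMeasurable)).2 hθXh2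
  exact ⟨LipschitzWithGrowth.integrable_comp hgrowth hθ hXL2 hθXL2,
    LipschitzWithGrowth.abs_integral_sub_le_of_integral_sq_le hgrowth hθnonneg hθ hXL2
      ((hXL2.condExp one_le_two).ae_eq hstat) hθXL2 hθXhL2 hθXhX⟩

/-- Quadrature error bound for stationary quantization and a locally Lipschitz functional with
`θ`-growth: `F(X)` is integrable and `|E[F(X)] − E[F(X̂)]| ≤ 2 [F]_Lip ‖X − X̂‖₂ ‖θ(X)‖₂`. -/
theorem stmt15 {d : ℕ} {Ω : Type*} [MeasureSpace Ω] [IsProbabilityMeasure (ℙ : Measure Ω)]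
    (X Xh : Ω → EuclideanSpace ℝ (Fin d))
    (hX : Measurable X) (hXh : Measurable Xh)
    (hX2 : Integrable (fun ω => ‖X ω‖^2) ℙ)
    (hfin : (Set.range Xh).Finite)
    (hstat : (ℙ : Measure Ω)[X | MeasurableSpace.comap Xh inferInstance] =ᵐ[(ℙ : Measure Ω)] Xh)
    (θf : EuclideanSpace ℝ (Fin d) → ℝ)
    (hθconv : ConvexOn ℝ univ θf)
    (hθnonneg : ∀ x, 0 ≤ θf x)
    (hθL2 : Integrable (fun ω => (θf (X ω))^2) ℙ)
    (F : EuclideanSpace ℝ (Fin d) → ℝ)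
    (L : ℝ)
    (hgrowth : ∀ x y, |F x - F y| ≤ L * ‖x - y‖ * (θf x + θf y)) :
    Integrable (fun ω => F (X ω)) ℙ ∧
    |(∫ ω, F (X ω) ∂ℙ) - ∫ ω, F (Xh ω) ∂ℙ|
      ≤ 2 * L * ((∫ ω, ‖X ω - Xh ω‖^2 ∂ℙ) ^ ((1:ℝ)/2))
          * ((∫ ω, (θf (X ω))^2 ∂ℙ) ^ ((1:ℝ)/2)) :=
  stmt15_general X Xh hX hXh hX2 hstat θf hθconv hθnonneg hθL2 F L hgrowth
end
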